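/- arXiv:2106.07467 — 4 statements merged into one kernel-verified Lean document; each statement's English description precedes it below -/
import Mathlib

section
/- Let y : [0,∞) → (0,∞) be a C¹ function, γ ∈ (1,3), C > 0 constants, and suppose y'(t) ≥ -C·y(t)^{(γ+1)/(2γ-2)}·(1+y(t)²)^{3/2} for all t ≥ 0, and y(t) < 1/√γ for all t. Define Y(t) = (y(t)/√(1+y(t)²))^{(3-γ)/(2γ-2)}·(1+y(t)²)^{(γ+1)/(4γ-4)}. Then there exists a constant C' > 0 (depending only on C and γ) such that Y'(t) ≥ -C'·Y(t)² for all t ≥ 0. -/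
/-!
Write `a = (3-γ)/(2γ-2) > 0`. Then `Y = y^a √(1+y²)` and the hypothesis reads
`y' ≥ -C y^(a+1) (1+y²)^(3/2)`. Since `Y'` is `y'` times a nonnegative factor, the chain rule gives
`Y' ≥ -C (a(1+y²) + y²) Y²`, and `y² < 1/γ` bounds `a(1+y²) + y²` by a constant.
-/

open Real Filter Topology

lemma div_sqrt_rpow_mul_rpow_eq {v w : ℝ} (hv : 0 ≤ v) (hw : 0 < w) (a : ℝ) :
    (v / √w) ^ a * w ^ (a / 2 + 1 / 2) = v ^ a * √w := by
  rw [div_rpow hv (sqrt_nonneg w), rpow_add hw, sqrt_eq_rpow, ← rpow_mul hw.le,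
    show 1 / 2 * a = a / 2 by ring]
  field_simp

lemma hasDerivAt_rpow_mul_sqrt_one_add_sq {v : ℝ} (hv : v ≠ 0) (a : ℝ) :
    HasDerivAt (fun x => x ^ a * √(1 + x ^ 2))
      (a * v ^ (a - 1) * √(1 + v ^ 2) + v ^ a * (v / √(1 + v ^ 2))) v := by
  have hw : 1 + v ^ 2 ≠ 0 := by positivity
  have hsq : HasDerivAt (fun x => 1 + x ^ 2) (2 * v) v := by
    simpa using (hasDerivAt_pow 2 v).const_add 1
  have hsqrt : HasDerivAt (fun x => √(1 + x ^ 2)) (v / √(1 + v ^ 2)) v :=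
    ((hasDerivAt_sqrt hw).comp v hsq).congr_deriv (by field_simp)
  exact (hasDerivAt_rpow_const (Or.inl hv)).mul hsqrt

lemma rpow_mul_sqrt_deriv_lower_bound {a C v d : ℝ} (ha : 0 ≤ a) (hv : 0 < v)
    (hd : -C * v ^ (a + 1) * (1 + v ^ 2) ^ ((3 : ℝ) / 2) ≤ d) :
    -C * (a * (1 + v ^ 2) + v ^ 2) * (v ^ a * √(1 + v ^ 2)) ^ 2 ≤
      (a * v ^ (a - 1) * √(1 + v ^ 2) + v ^ a * (v / √(1 + v ^ 2))) * d := by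
  have hw : (0 : ℝ) < 1 + v ^ 2 := by positivity
  have hs2 : √(1 + v ^ 2) ^ 2 = 1 + v ^ 2 := sq_sqrt hw.le
  have h32 : (1 + v ^ 2) ^ ((3 : ℝ) / 2) = √(1 + v ^ 2) ^ 3 := by
    rw [show (3 : ℝ) / 2 = 1 / 2 * 3 by ring, rpow_mul hw.le, ← sqrt_eq_rpow]
    norm_cast
  have hfactor : 0 ≤ a * v ^ (a - 1) * √(1 + v ^ 2) + v ^ a * (v / √(1 + v ^ 2)) := by
    positivity
  calc -C * (a * (1 + v ^ 2) + v ^ 2) * (v ^ a * √(1 + v ^ 2)) ^ 2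
      = (a * v ^ (a - 1) * √(1 + v ^ 2) + v ^ a * (v / √(1 + v ^ 2)))
          * (-C * v ^ (a + 1) * (1 + v ^ 2) ^ ((3 : ℝ) / 2)) := by
        rw [rpow_sub_one hv.ne', rpow_add_one hv.ne', h32]
        field_simp
        rw [hs2]
    _ ≤ _ := mul_le_mul_of_nonneg_left hd hfactor

theorem stmt_4_general (γ C : ℝ) (hγ1 : 1 < γ) (hγ3 : γ < 3) (hC : 0 < C)
    (y y' : ℝ → ℝ)
    (hderiv : ∀ t : ℝ, 0 ≤ t → HasDerivAt y (y' t) t)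
    (hpos : ∀ t : ℝ, 0 ≤ t → 0 < y t)
    (hupper : ∀ t : ℝ, 0 ≤ t → y t < 1 / Real.sqrt γ)
    (hineq : ∀ t : ℝ, 0 ≤ t →
      y' t ≥ -C * (y t) ^ ((γ + 1) / (2 * γ - 2)) * (1 + (y t) ^ 2) ^ ((3:ℝ) / 2)) :
    ∃ C' : ℝ, 0 < C' ∧ ∀ t : ℝ, 0 ≤ t →
      deriv (fun s : ℝ =>
          (y s / Real.sqrt (1 + (y s) ^ 2)) ^ ((3 - γ) / (2 * γ - 2))
            * (1 + (y s) ^ 2) ^ ((γ + 1) / (4 * γ - 4))) t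
        ≥ -C' * ((y t / Real.sqrt (1 + (y t) ^ 2)) ^ ((3 - γ) / (2 * γ - 2))
            * (1 + (y t) ^ 2) ^ ((γ + 1) / (4 * γ - 4))) ^ 2 := by
  have hγ : 0 < 2 * γ - 2 := by linarith
  have hexp₁ : (γ + 1) / (2 * γ - 2) = (3 - γ) / (2 * γ - 2) + 1 := by
    rw [div_add_one hγ.ne']; ring
  have hexp₂ : (γ + 1) / (4 * γ - 4) = (3 - γ) / (2 * γ - 2) / 2 + 1 / 2 := by
    rw [show 4 * γ - 4 = (2 * γ - 2) * 2 by ring, ← div_div, hexp₁]; ring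
  set a := (3 - γ) / (2 * γ - 2)
  have ha : 0 < a := div_pos (by linarith) hγ
  refine ⟨C * (a * (1 + 1 / γ) + 1 / γ), by positivity, fun t ht => ?_⟩
  have hy := hpos t ht
  have hy2 : y t ^ 2 ≤ 1 / γ := by
    have := pow_lt_pow_left₀ (hupper t ht) hy.le two_ne_zero
    rw [div_pow, one_pow, sq_sqrt (by linarith)] at this
    exact this.le
  have hY : (fun s => (y s / √(1 + y s ^ 2)) ^ a * (1 + y s ^ 2) ^ (a / 2 + 1 / 2))
      =ᶠ[𝓝 t] fun s => y s ^ a * √(1 + y s ^ 2) := by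
    filter_upwards [(hderiv t ht).continuousAt.eventually (lt_mem_nhds hy)] with s hs
    exact div_sqrt_rpow_mul_rpow_eq hs.le (by positivity) a
  have hD := ((hasDerivAt_rpow_mul_sqrt_one_add_sq hy.ne' a).comp t (hderiv t ht))
    |>.congr_of_eventuallyEq hY
  have hbound := rpow_mul_sqrt_deriv_lower_bound ha.le hy (hexp₁ ▸ hineq t ht)
  rw [hexp₂, hD.deriv, div_sqrt_rpow_mul_rpow_eq hy.le (by positivity)]
  have hK : a * (1 + y t ^ 2) + y t ^ 2 ≤ a * (1 + 1 / γ) + 1 / γ := by gcongr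
  refine le_trans ?_ hbound
  gcongr ?_ * _
  linarith [mul_le_mul_of_nonneg_left hK hC.le]

/-- If `y` is a positive `C¹` function with
`y' ≥ -C y^((γ+1)/(2γ-2)) (1+y²)^(3/2)` and `y < 1/√γ`, then the quantity
`Y = (y/√(1+y²))^((3-γ)/(2γ-2)) (1+y²)^((γ+1)/(4γ-4))` satisfies a Riccati-type
lower bound `Y' ≥ -C' Y²`. -/
theorem stmt_4 (γ C : ℝ) (hγ1 : 1 < γ) (hγ3 : γ < 3) (hC : 0 < C)
    (y y' : ℝ → ℝ)
    (hderiv : ∀ t : ℝ, 0 ≤ t → HasDerivAt y (y' t) t)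
    (hcont : ContinuousOn y' (Set.Ici 0))
    (hpos : ∀ t : ℝ, 0 ≤ t → 0 < y t)
    (hupper : ∀ t : ℝ, 0 ≤ t → y t < 1 / Real.sqrt γ)
    (hineq : ∀ t : ℝ, 0 ≤ t →
      y' t ≥ -C * (y t) ^ ((γ + 1) / (2 * γ - 2)) * (1 + (y t) ^ 2) ^ ((3:ℝ) / 2)) :
    ∃ C' : ℝ, 0 < C' ∧ ∀ t : ℝ, 0 ≤ t →
      deriv (fun s : ℝ =>
          (y s / Real.sqrt (1 + (y s) ^ 2)) ^ ((3 - γ) / (2 * γ - 2))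
            * (1 + (y s) ^ 2) ^ ((γ + 1) / (4 * γ - 4))) t
        ≥ -C' * ((y t / Real.sqrt (1 + (y t) ^ 2)) ^ ((3 - γ) / (2 * γ - 2))
            * (1 + (y t) ^ 2) ^ ((γ + 1) / (4 * γ - 4))) ^ 2 :=
  stmt_4_general γ C hγ1 hγ3 hC y y' hderiv hpos hupper hineq
end

section
/- Let q : [0,T) → ℝ be differentiable, μ : [0,T) → ℝ continuous with μ(t) > 0, and N > 0. Suppose q(0) ≤ -N√(1+υ) for some υ > 0 and q'(t) ≤ -(1/2)·μ(t)·(q(t)² - N²) for all t. Then q(t) ≤ q(0) for all t ∈ [0,T), and 1/q(t) ≥ 1/q(0) + (υ/(2(1+υ)))·∫₀ᵗ μ(s) ds; in particular if ∫₀^∞ μ(s)ds = ∞ then T < ∞. -/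
/-!
While `q ≤ -N√(1+υ)` we have `q² - N² ≥ υ q² / (1+υ)`, so the inequality gives
`q' ≤ -c μ q²` with `c = υ / (2(1+υ))`. In particular `q' < 0` whenever `q` returns to `q(0)`,
which keeps `q ≤ q(0) < 0`, and then `(1/q)' = -q'/q² ≥ c μ` integrates to the stated bound.
Since `1/q < 0`, the bound is incompatible with `∫₀ᵗ μ → ∞`, so `q` cannot exist for all `t ≥ 0`.
-/

open Filter intervalIntegral Set

lemma le_apply_left_of_deriv_neg_at_level {f f' : ℝ → ℝ} {a b : ℝ}
    (hf : ∀ x ∈ Icc a b, HasDerivAt f (f' x) x) (hneg : ∀ x ∈ Ico a b, f x = f a → f' x < 0) :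
    ∀ x ∈ Icc a b, f x ≤ f a := fun _ hx =>
  image_le_of_deriv_right_lt_deriv_boundary (B := fun _ => f a)
    (fun x hx => (hf x hx).continuousAt.continuousWithinAt)
    (fun x hx => (hf x (Ico_subset_Icc_self hx)).hasDerivWithinAt) le_rfl
    (fun _ => hasDerivAt_const _ _) hneg hx

lemma mul_integral_le_inv_sub_inv {q q' μ : ℝ → ℝ} {a b c : ℝ} (hab : a ≤ b)
    (hμ : Continuous μ) (hq : ∀ x ∈ Icc a b, HasDerivAt q (q' x) x)
    (hq0 : ∀ x ∈ Icc a b, q x ≠ 0) (h : ∀ x ∈ Ioo a b, c * μ x * q x ^ 2 ≤ -q' x) :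
    c * ∫ s in a..b, μ s ≤ (q b)⁻¹ - (q a)⁻¹ := by
  have hinv : ∀ x ∈ Icc a b, HasDerivAt q⁻¹ (-q' x / q x ^ 2) x :=
    fun x hx => (hq x hx).inv (hq0 x hx)
  rw [← integral_const_mul]
  refine integral_le_sub_of_hasDeriv_right_of_le hab
    (fun x hx => (hinv x hx).continuousAt.continuousWithinAt)
    (fun x hx => (hinv x (Ioo_subset_Icc_self hx)).hasDerivWithinAt)
    (hμ.const_mul c).integrableOn_Icc (fun x hx => ?_)
  have hqx : q x ≠ 0 := hq0 x (Ioo_subset_Icc_self hx)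
  rw [le_div_iff₀ (by positivity)]
  exact h x hx

lemma sq_mul_le_sq_of_le_neg_mul_sqrt {N υ x : ℝ} (hN : 0 ≤ N) (hυ : 0 ≤ 1 + υ)
    (hx : x ≤ -N * √(1 + υ)) : N ^ 2 * (1 + υ) ≤ x ^ 2 := by
  calc N ^ 2 * (1 + υ) = (N * √(1 + υ)) ^ 2 := by rw [mul_pow, Real.sq_sqrt hυ]
    _ ≤ (-x) ^ 2 := pow_le_pow_left₀ (by positivity) (by linarith) 2
    _ = x ^ 2 := neg_sq x

lemma neg_mul_sqrt_neg {N υ : ℝ} (hN : 0 < N) (hυ : 0 < 1 + υ) : -N * √(1 + υ) < 0 := by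
  rw [neg_mul, neg_lt_zero]
  positivity

lemma riccati_rhs_le {N υ m x : ℝ} (hN : 0 ≤ N) (hυ : 0 < υ) (hm : 0 ≤ m)
    (hx : x ≤ -N * √(1 + υ)) :
    -(1 / 2) * m * (x ^ 2 - N ^ 2) ≤ -(υ / (2 * (1 + υ))) * m * x ^ 2 := by
  have hsq := sq_mul_le_sq_of_le_neg_mul_sqrt hN (by linarith) hx
  have hrate : υ / (2 * (1 + υ)) * x ^ 2 ≤ 1 / 2 * (x ^ 2 - N ^ 2) := by
    rw [div_mul_eq_mul_div, div_le_iff₀ (by positivity)]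
    nlinarith
  nlinarith

section Riccati

variable {q q' μ : ℝ → ℝ} {N υ t : ℝ}

lemma riccati_le_initial (hN : 0 < N) (hυ : 0 < υ) (hμpos : ∀ x, 0 ≤ x → 0 < μ x)
    (hq0 : q 0 ≤ -N * √(1 + υ)) (hderiv : ∀ x ∈ Icc 0 t, HasDerivAt q (q' x) x)
    (hineq : ∀ x ∈ Icc 0 t, q' x ≤ -(1 / 2) * μ x * (q x ^ 2 - N ^ 2)) :
    ∀ x ∈ Icc 0 t, q x ≤ q 0 := by
  refine le_apply_left_of_deriv_neg_at_level hderiv fun x hx hqx => ?_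
  have hq0neg : q 0 < 0 := hq0.trans_lt (neg_mul_sqrt_neg hN (by linarith))
  have hμx := hμpos x hx.1
  have hqx0 : q x ≠ 0 := hqx ▸ hq0neg.ne
  calc q' x ≤ -(1 / 2) * μ x * (q x ^ 2 - N ^ 2) := hineq x (Ico_subset_Icc_self hx)
    _ ≤ -(υ / (2 * (1 + υ))) * μ x * q x ^ 2 := riccati_rhs_le hN.le hυ hμx.le (hqx ▸ hq0)
    _ < 0 := by
      have : 0 < υ / (2 * (1 + υ)) * μ x * q x ^ 2 := by positivity
      linarith

lemma riccati_bound (hN : 0 < N) (hυ : 0 < υ) (hμc : Continuous μ)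
    (hμpos : ∀ x, 0 ≤ x → 0 < μ x) (hq0 : q 0 ≤ -N * √(1 + υ)) (ht : 0 ≤ t)
    (hderiv : ∀ x ∈ Icc 0 t, HasDerivAt q (q' x) x)
    (hineq : ∀ x ∈ Icc 0 t, q' x ≤ -(1 / 2) * μ x * (q x ^ 2 - N ^ 2)) :
    q t ≤ q 0 ∧ 1 / q t ≥ 1 / q 0 + (υ / (2 * (1 + υ))) * ∫ s in (0:ℝ)..t, μ s := by
  have hle := riccati_le_initial hN hυ hμpos hq0 hderiv hineq
  have hq0neg : q 0 < 0 := hq0.trans_lt (neg_mul_sqrt_neg hN (by linarith))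
  refine ⟨hle t (right_mem_Icc.2 ht), ?_⟩
  have hint := mul_integral_le_inv_sub_inv ht hμc hderiv
    (fun x hx => ((hle x hx).trans_lt hq0neg).ne) fun x hx => by
      have hx' := Ioo_subset_Icc_self hx
      have := riccati_rhs_le hN.le hυ (hμpos x hx'.1).le ((hle x hx').trans hq0)
      linarith [hineq x hx']
  rw [one_div, one_div]
  linarith

end Riccati

/-- Riccati-type inequality with threshold `N`: if `q(0) ≤ -N√(1+υ)` and
`q' ≤ -(1/2) μ (q² - N²)` with `μ > 0`, then `q` stays below `q(0)`, the
reciprocal obeys the stated integral lower bound, and if `∫₀^∞ μ = ∞` then the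
solution cannot exist globally (the maximal time is finite). -/
theorem stmt_8 (T : ℝ) (q q' μ : ℝ → ℝ) (N υ : ℝ)
    (hN : 0 < N) (hυ : 0 < υ)
    (hμc : Continuous μ) (hμpos : ∀ t : ℝ, 0 ≤ t → 0 < μ t)
    (hq0 : q 0 ≤ -N * Real.sqrt (1 + υ))
    (hderiv : ∀ t ∈ Set.Ico (0:ℝ) T, HasDerivAt q (q' t) t)
    (hineq : ∀ t ∈ Set.Ico (0:ℝ) T, q' t ≤ -(1/2) * μ t * ((q t) ^ 2 - N ^ 2)) :
    (∀ t ∈ Set.Ico (0:ℝ) T,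
        q t ≤ q 0 ∧
        1 / q t ≥ 1 / q 0 + (υ / (2 * (1 + υ))) * ∫ s in (0:ℝ)..t, μ s) ∧
    (Tendsto (fun t : ℝ => ∫ s in (0:ℝ)..t, μ s) atTop atTop →
      ¬ (∀ t : ℝ, 0 ≤ t →
            HasDerivAt q (q' t) t ∧
            q' t ≤ -(1/2) * μ t * ((q t) ^ 2 - N ^ 2))) := by
  have hsub : ∀ {t}, t ∈ Ico 0 T → Icc 0 t ⊆ Ico 0 T := fun ht x hx => ⟨hx.1, hx.2.trans_lt ht.2⟩
  refine ⟨fun t ht => riccati_bound hN hυ hμc hμpos hq0 ht.1 (fun x hx => hderiv x (hsub ht hx))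
    (fun x hx => hineq x (hsub ht hx)), fun hint hglobal => ?_⟩
  have hc : 0 < υ / (2 * (1 + υ)) := by positivity
  obtain ⟨t, hpos, ht⟩ := (((tendsto_atTop_add_const_left _ (1 / q 0)
    (hint.const_mul_atTop hc)).eventually_gt_atTop 0).and (eventually_ge_atTop 0)).exists
  obtain ⟨hqt, hbound⟩ := riccati_bound hN hυ hμc hμpos hq0 ht
    (fun x hx => (hglobal x hx.1).1) (fun x hx => (hglobal x hx.1).2)
  have hq0neg : q 0 < 0 := hq0.trans_lt (neg_mul_sqrt_neg hN (by linarith))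
  have : 1 / q t < 0 := one_div_neg.2 (hqt.trans_lt hq0neg)
  linarith
end

section
/- For P(ρ,S) = (γ-1)n(ρ,S)^γ exp(S/C_v) with n the implicit root of n^γ exp(S/C_v)+c²(n-ρ)=0: P(ρ,S) ≥ 0 with equality iff ρ = 0, and for ρ > 0, ∂ρ P(ρ,S) > 0. -/
open Real Filter Set Topology

/-!
Write `E = exp (S / C_v)` and `F x = E x^γ + c² x`, so that the defining equation of `n` reads
`F (n ρ) = c² ρ`. Since `F` is strictly increasing on `[0, ∞)` with `F 0 = 0`, `n` vanishes
exactly at `ρ = 0`, which gives the sign of `P = (γ - 1) E n^γ`. For `ρ > 0` the map `ρ ↦ n ρ`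
is strictly increasing onto `(0, ∞)`, hence continuous, so the inverse function theorem gives
`n' = c² / F'(n)`. On `ρ ≥ 0` the defining equation rewrites `P` as `(γ - 1) c² (ρ - n)`, hence
`∂ρ P = (γ - 1) c² (1 - c² / F'(n)) > 0`.
-/

noncomputable def powAffine (γ a b x : ℝ) : ℝ := x ^ γ * a + b * x

section implicitRoot

variable {γ a b : ℝ}

lemma powAffine_zero (hγ : γ ≠ 0) : powAffine γ a b 0 = 0 := by
  simp [powAffine, zero_rpow hγ]

lemma powAffine_strictMonoOn (hγ : 0 ≤ γ) (ha : 0 ≤ a) (hb : 0 < b) :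
    StrictMonoOn (powAffine γ a b) (Ici 0) := by
  intro x hx y _ hxy
  have hpow : x ^ γ ≤ y ^ γ := rpow_le_rpow hx hxy.le hγ
  unfold powAffine
  nlinarith [mul_le_mul_of_nonneg_right hpow ha]

lemma hasDerivAt_powAffine {x : ℝ} (hx : 0 < x) :
    HasDerivAt (powAffine γ a b) (γ * x ^ (γ - 1) * a + b) x := by
  have h := ((hasDerivAt_rpow_const (p := γ) (Or.inl hx.ne')).mul_const a).add
    ((hasDerivAt_id x).const_mul b)
  rwa [mul_one] at h

variable (hγ : 0 < γ) (ha : 0 ≤ a) (hb : 0 < b) {n : ℝ → ℝ}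
  (hn : ∀ r, 0 ≤ r → 0 ≤ n r) (hroot : ∀ r, 0 ≤ r → powAffine γ a b (n r) = b * r)
include hγ ha hb hn hroot

lemma implicitRoot_eq_zero_iff {r : ℝ} (hr : 0 ≤ r) : n r = 0 ↔ r = 0 := by
  have hinj := (powAffine_strictMonoOn hγ.le ha hb).injOn
  constructor
  · intro h
    have := hroot r hr
    rw [h, powAffine_zero hγ.ne'] at this
    exact (mul_eq_zero.1 this.symm).resolve_left hb.ne'
  · rintro rfl
    refine hinj (hn 0 le_rfl) self_mem_Ici ?_
    rw [hroot 0 le_rfl, powAffine_zero hγ.ne', mul_zero]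

lemma implicitRoot_pos {r : ℝ} (hr : 0 < r) : 0 < n r :=
  (hn r hr.le).lt_of_ne' fun h =>
    hr.ne' ((implicitRoot_eq_zero_iff hγ ha hb hn hroot hr.le).1 h)

lemma implicitRoot_strictMonoOn : StrictMonoOn n (Ici 0) := by
  intro r hr s hs hrs
  by_contra! hle
  have := (powAffine_strictMonoOn hγ.le ha hb).monotoneOn (hn s hs) (hn r hr) hle
  rw [hroot r hr, hroot s hs] at this
  nlinarith

lemma Ioi_subset_image_implicitRoot : Ioi 0 ⊆ n '' Ioi 0 := by
  intro y (hy : 0 < y)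
  have hr : 0 < powAffine γ a b y / b := by
    unfold powAffine
    have : 0 ≤ y ^ γ * a := mul_nonneg (rpow_nonneg hy.le γ) ha
    positivity
  refine ⟨_, hr, (powAffine_strictMonoOn hγ.le ha hb).injOn (hn _ hr.le) hy.le ?_⟩
  rw [hroot _ hr.le, mul_div_cancel₀ _ hb.ne']

lemma implicitRoot_continuousAt {ρ : ℝ} (hρ : 0 < ρ) : ContinuousAt n ρ :=
  (implicitRoot_strictMonoOn hγ ha hb hn hroot).continuousAt_of_image_mem_nhds
    (Ici_mem_nhds hρ)
    (mem_of_superset (Ioi_mem_nhds (implicitRoot_pos hγ ha hb hn hroot hρ))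
      ((Ioi_subset_image_implicitRoot hγ ha hb hn hroot).trans (image_mono Ioi_subset_Ici_self)))

lemma hasDerivAt_implicitRoot {ρ : ℝ} (hρ : 0 < ρ) :
    HasDerivAt n (b / (γ * n ρ ^ (γ - 1) * a + b)) ρ := by
  have hnρ := implicitRoot_pos hγ ha hb hn hroot hρ
  have hD : 0 < γ * n ρ ^ (γ - 1) * a + b := by
    have : 0 ≤ γ * n ρ ^ (γ - 1) * a := by positivity
    linarith
  have hinv := HasDerivAt.of_local_left_inverse (implicitRoot_continuousAt hγ ha hb hn hroot hρ)
    ((hasDerivAt_powAffine hnρ).div_const b) (div_pos hD hb).ne' <| by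
      filter_upwards [Ioi_mem_nhds hρ] with r hr
      rw [hroot r (le_of_lt hr), mul_div_cancel_left₀ _ hb.ne']
  rwa [inv_div] at hinv

lemma hasDerivAt_pressure {ρ : ℝ} (hρ : 0 < ρ) :
    HasDerivAt (fun r => (γ - 1) * n r ^ γ * a)
      (b * γ * (γ - 1) * n ρ ^ (γ - 1) * a / (γ * n ρ ^ (γ - 1) * a + b)) ρ := by
  have hD : 0 < γ * n ρ ^ (γ - 1) * a + b := by
    have : 0 ≤ γ * n ρ ^ (γ - 1) * a := by
      have := implicitRoot_pos hγ ha hb hn hroot hρ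
      positivity
    linarith
  have hlin := (((hasDerivAt_id' ρ).const_mul b).sub
    ((hasDerivAt_implicitRoot hγ ha hb hn hroot hρ).const_mul b)).const_mul (γ - 1)
  refine (hlin.congr_of_eventuallyEq ?_).congr_deriv ?_
  · filter_upwards [Ici_mem_nhds hρ] with r hr
    have := hroot r hr
    unfold powAffine at this
    simp only [Pi.sub_apply]
    linear_combination (γ - 1) * this
  · field_simp
    ring

end implicitRoot

theorem stmt_13_general (γ Cv c : ℝ) (hγ : 1 < γ) (hc : 0 < c)
    (nf : ℝ → ℝ → ℝ)
    (hnonneg : ∀ ρ : ℝ, 0 ≤ ρ → ∀ S : ℝ, 0 ≤ nf ρ S)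
    (heq : ∀ ρ : ℝ, 0 ≤ ρ → ∀ S : ℝ,
      (nf ρ S) ^ γ * Real.exp (S / Cv) + c ^ 2 * (nf ρ S - ρ) = 0) :
    (∀ ρ : ℝ, 0 ≤ ρ → ∀ S : ℝ,
      0 ≤ (γ - 1) * (nf ρ S) ^ γ * Real.exp (S / Cv) ∧
      ((γ - 1) * (nf ρ S) ^ γ * Real.exp (S / Cv) = 0 ↔ ρ = 0)) ∧
    (∀ ρ : ℝ, 0 < ρ → ∀ S : ℝ,
      ∃ d : ℝ, 0 < d ∧
        HasDerivAt (fun r : ℝ => (γ - 1) * (nf r S) ^ γ * Real.exp (S / Cv)) d ρ) := by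
  have hγ0 : 0 < γ := by linarith
  have hc2 : 0 < c ^ 2 := by positivity
  have hE S : 0 ≤ exp (S / Cv) := (exp_pos _).le
  have hn S : ∀ r, 0 ≤ r → 0 ≤ nf r S := fun r hr => hnonneg r hr S
  have hroot S : ∀ r, 0 ≤ r → powAffine γ (exp (S / Cv)) (c ^ 2) (nf r S) = c ^ 2 * r := by
    intro r hr
    unfold powAffine
    linear_combination heq r hr S
  refine ⟨fun ρ hρ S => ⟨?_, ?_⟩, fun ρ hρ S =>
    ⟨_, ?_, hasDerivAt_pressure hγ0 (hE S) hc2 (hn S) (hroot S) hρ⟩⟩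
  · have := rpow_nonneg (hn S ρ hρ) γ
    have : 0 ≤ γ - 1 := by linarith
    positivity
  · rw [← implicitRoot_eq_zero_iff hγ0 (hE S) hc2 (hn S) (hroot S) hρ,
      ← rpow_eq_zero (hn S ρ hρ) hγ0.ne']
    simp [(exp_pos _).ne', sub_eq_zero, hγ.ne']
  · have := implicitRoot_pos hγ0 (hE S) hc2 (hn S) (hroot S) hρ
    have : 0 < γ - 1 := by linarith
    positivity

/-- For `P(ρ,S) = (γ-1) n(ρ,S)^γ exp(S/C_v)`: `P ≥ 0` with equality iff
`ρ = 0`, and for `ρ > 0` the partial derivative `∂ρ P` is positive. -/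
theorem stmt_13 (γ Cv c : ℝ) (hγ : 1 < γ) (hCv : 0 < Cv) (hc : 0 < c)
    (nf : ℝ → ℝ → ℝ)
    (hnonneg : ∀ ρ : ℝ, 0 ≤ ρ → ∀ S : ℝ, 0 ≤ nf ρ S)
    (heq : ∀ ρ : ℝ, 0 ≤ ρ → ∀ S : ℝ,
      (nf ρ S) ^ γ * Real.exp (S / Cv) + c ^ 2 * (nf ρ S - ρ) = 0) :
    (∀ ρ : ℝ, 0 ≤ ρ → ∀ S : ℝ,
      0 ≤ (γ - 1) * (nf ρ S) ^ γ * Real.exp (S / Cv) ∧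
      ((γ - 1) * (nf ρ S) ^ γ * Real.exp (S / Cv) = 0 ↔ ρ = 0)) ∧
    (∀ ρ : ℝ, 0 < ρ → ∀ S : ℝ,
      ∃ d : ℝ, 0 < d ∧
        HasDerivAt (fun r : ℝ => (γ - 1) * (nf r S) ^ γ * Real.exp (S / Cv)) d ρ) :=
  stmt_13_general γ Cv c hγ hc nf hnonneg heq
end

section
/- Fix γ > 1, C_v > 0, c > 0, B > 0, and let P(ρ,S) be the polytropic relativistic pressure defined via n. Then uniformly for |S| ≤ B, as ρ → 0⁺: P(ρ,S) = Θ(ρ^γ), ∂ρ P(ρ,S) = Θ(ρ^{γ-1}), and ∂S P(ρ,S) = Θ(ρ^γ), i.e., there exist constants 0 < c₁ ≤ c₂ and ρ₀ > 0 such that c₁ρ^γ ≤ P(ρ,S) ≤ c₂ρ^γ for 0 < ρ ≤ ρ₀ and |S| ≤ B (and similarly for the derivatives). -/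
/-!
Writing `n = μ t` with `μ ^ (γ - 1) * exp (S / Cv) = c ^ 2` turns the defining equation
`n ^ γ * exp (S / Cv) + c ^ 2 * (n - ρ) = 0` into `t ^ γ + t = ρ / μ`, so `n = μ(S) h(ρ / μ(S))`
with `h` the single inverse function of `t ↦ t ^ γ + t`; the chain rule then differentiates `n`,
and `P = (γ - 1) n ^ γ e = (γ - 1) c ^ 2 (ρ - n)` with `e = exp (S / Cv)`:
`∂ρ P = (γ - 1) γ n ^ (γ - 1) e f` and `∂S P = (γ - 1) / Cv n ^ γ e f` with
`f = c ^ 2 / (γ n ^ (γ - 1) e + c ^ 2)`. For `ρ ≤ μ(B)` and `|S| ≤ B` the equation forces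
`ρ / 2 ≤ n ≤ ρ` and `n ^ (γ - 1) e ≤ c ^ 2`, so `f ∈ [1 / (1 + γ), 1]` and all three quantities are
comparable to the corresponding power of `ρ`.
-/

open Real Filter Topology

lemma rpow_eq_rpow_sub_one_mul {x γ : ℝ} (hx : 0 ≤ x) (hγ : γ ≠ 0) : x ^ γ = x ^ (γ - 1) * x := by
  simpa using rpow_add_one' hx (y := γ - 1) (by simpa)

lemma strictMonoOn_rpow_mul_add {γ c e : ℝ} (hγ : 0 ≤ γ) (he : 0 ≤ e) (hc : c ≠ 0) :
    StrictMonoOn (fun n => n ^ γ * e + c ^ 2 * n) (Set.Ici 0) := fun _ hm _ _ hmn =>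
  add_lt_add_of_le_of_lt (mul_le_mul_of_nonneg_right (rpow_le_rpow hm hmn.le hγ) he)
    (mul_lt_mul_of_pos_left hmn (by positivity))

lemma rpow_mul_mem_Icc {a γ n ρ e emin emax : ℝ} (ha : 0 ≤ a) (haγ : a ≤ γ) (hn : ρ ≤ 2 * n)
    (hnρ : n ≤ ρ) (hemin : 0 ≤ emin) (he : emin ≤ e) (he' : e ≤ emax) :
    emin / 2 ^ γ * ρ ^ a ≤ n ^ a * e ∧ n ^ a * e ≤ emax * ρ ^ a := by
  have hn0 : 0 ≤ n := by linarith
  have hρ0 : 0 ≤ ρ := hn0.trans hnρ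
  constructor
  · calc emin / 2 ^ γ * ρ ^ a ≤ emin * (ρ ^ a / 2 ^ a) := by
          rw [div_mul_eq_mul_div, mul_div_assoc]
          gcongr
          norm_num
      _ = (ρ / 2) ^ a * emin := by rw [div_rpow hρ0 zero_le_two, mul_comm]
      _ ≤ n ^ a * e := by gcongr; linarith
  · calc n ^ a * e ≤ ρ ^ a * emax := by gcongr; exact hemin.trans he
      _ = emax * ρ ^ a := mul_comm _ _

lemma inv_one_add_le_div_and_div_le_one {γ c q : ℝ} (hγ : 0 ≤ γ) (hc : c ≠ 0) (hq : 0 ≤ q)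
    (hqc : q ≤ c ^ 2) : (1 + γ)⁻¹ ≤ c ^ 2 / (γ * q + c ^ 2) ∧ c ^ 2 / (γ * q + c ^ 2) ≤ 1 := by
  have hc2 : 0 < c ^ 2 := by positivity
  constructor
  · rw [inv_eq_one_div, div_le_div_iff₀ (by linarith) (by positivity)]
    nlinarith
  · rw [div_le_one (by positivity)]
    nlinarith

lemma mul_mul_mem_Icc {k kmin kmax X lo hi f fmin : ℝ} (hkmin : 0 ≤ kmin) (hk : kmin ≤ k)
    (hk' : k ≤ kmax) (hlo : 0 ≤ lo) (hX : lo ≤ X) (hX' : X ≤ hi) (hfmin : 0 ≤ fmin)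
    (hf : fmin ≤ f) (hf' : f ≤ 1) : kmin * lo * fmin ≤ k * X * f ∧ k * X * f ≤ kmax * hi := by
  have hkX : 0 ≤ k * X := mul_nonneg (hkmin.trans hk) (hlo.trans hX)
  refine ⟨by gcongr; exact hkmin.trans hk, ?_⟩
  calc k * X * f ≤ k * X := mul_le_of_le_one_right hkX hf'
    _ ≤ kmax * hi := mul_le_mul hk' hX' (hlo.trans hX) (hkmin.trans (hk.trans hk'))

namespace PolytropicPressure

/-- `t ↦ t ^ γ + t`, continued by `t` on `t < 0` so that it becomes a bijection of `ℝ`. -/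
noncomputable def powAddSelf (γ t : ℝ) : ℝ := max t 0 ^ γ + t

noncomputable def profile (γ : ℝ) : ℝ → ℝ := Function.invFun (powAddSelf γ)

variable {γ : ℝ}

lemma powAddSelf_of_nonneg {t : ℝ} (ht : 0 ≤ t) : powAddSelf γ t = t ^ γ + t := by
  rw [powAddSelf, max_eq_left ht]

lemma strictMono_powAddSelf (hγ : 0 < γ) : StrictMono (powAddSelf γ) := fun _ _ hts =>
  add_lt_add_of_le_of_lt (rpow_le_rpow (le_max_right _ _) (max_le_max hts.le le_rfl) hγ.le) hts

lemma continuous_powAddSelf (hγ : 0 < γ) : Continuous (powAddSelf γ) :=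
  ((continuous_id.max continuous_const).rpow_const fun _ => Or.inr hγ.le).add continuous_id

lemma surjective_powAddSelf (hγ : 0 < γ) : Function.Surjective (powAddSelf γ) := by
  refine (continuous_powAddSelf hγ).surjective ?_ ?_
  · exact tendsto_atTop_mono
      (fun t => le_add_of_nonneg_left (rpow_nonneg (le_max_right t 0) γ)) tendsto_id
  · refine tendsto_id.congr' ?_
    filter_upwards [eventually_le_atBot 0] with t ht
    simp [powAddSelf, max_eq_right ht, zero_rpow hγ.ne']

lemma powAddSelf_profile (hγ : 0 < γ) (x : ℝ) : powAddSelf γ (profile γ x) = x :=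
  Function.invFun_eq (surjective_powAddSelf hγ x)

lemma profile_powAddSelf (hγ : 0 < γ) (t : ℝ) : profile γ (powAddSelf γ t) = t :=
  Function.leftInverse_invFun (strictMono_powAddSelf hγ).injective t

lemma strictMono_profile (hγ : 0 < γ) : StrictMono (profile γ) := fun x y hxy => by
  rw [← powAddSelf_profile hγ x, ← powAddSelf_profile hγ y] at hxy
  exact (strictMono_powAddSelf hγ).lt_iff_lt.mp hxy

lemma continuous_profile (hγ : 0 < γ) : Continuous (profile γ) :=
  (strictMono_profile hγ).monotone.continuous_of_surjective
    fun t => ⟨_, profile_powAddSelf hγ t⟩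

lemma profile_zero (hγ : 0 < γ) : profile γ 0 = 0 := by
  simpa [powAddSelf, zero_rpow hγ.ne'] using profile_powAddSelf hγ 0

lemma profile_pos (hγ : 0 < γ) {x : ℝ} (hx : 0 < x) : 0 < profile γ x :=
  profile_zero hγ ▸ strictMono_profile hγ hx

lemma profile_nonneg (hγ : 0 < γ) {x : ℝ} (hx : 0 ≤ x) : 0 ≤ profile γ x :=
  profile_zero hγ ▸ (strictMono_profile hγ).monotone hx

lemma profile_rpow_add_self (hγ : 0 < γ) {x : ℝ} (hx : 0 ≤ x) :
    profile γ x ^ γ + profile γ x = x := by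
  rw [← powAddSelf_of_nonneg (profile_nonneg hγ hx), powAddSelf_profile hγ]

lemma hasDerivAt_profile (hγ : 0 < γ) {x : ℝ} (hx : 0 < x) :
    HasDerivAt (profile γ) (γ * profile γ x ^ (γ - 1) + 1)⁻¹ x := by
  have ht := profile_pos hγ hx
  have hF : HasDerivAt (powAddSelf γ) (γ * profile γ x ^ (γ - 1) + 1) (profile γ x) := by
    refine ((hasDerivAt_rpow_const (Or.inl ht.ne')).add (hasDerivAt_id _)).congr_of_eventuallyEq ?_
    filter_upwards [eventually_gt_nhds ht] with t ht using powAddSelf_of_nonneg ht.le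
  exact hF.of_local_left_inverse (continuous_profile hγ).continuousAt (by positivity)
    (Eventually.of_forall (powAddSelf_profile hγ))

noncomputable def rootScale (γ Cv c S : ℝ) : ℝ := (c ^ 2) ^ (γ - 1)⁻¹ * exp (-S / (Cv * (γ - 1)))

/-- The paper's `n(ρ, S)`: the nonnegative root of `n ^ γ * exp (S / Cv) + c ^ 2 * (n - ρ) = 0`
(see `eq_densityRoot`). -/
noncomputable def densityRoot (γ Cv c ρ S : ℝ) : ℝ :=
  rootScale γ Cv c S * profile γ (ρ / rootScale γ Cv c S)

variable {Cv c : ℝ}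

lemma rootScale_pos (hc : c ≠ 0) (S : ℝ) : 0 < rootScale γ Cv c S := by
  unfold rootScale; positivity

lemma rootScale_rpow_mul_exp (hγ : 1 < γ) (S : ℝ) :
    rootScale γ Cv c S ^ (γ - 1) * exp (S / Cv) = c ^ 2 := by
  have hγ1 : γ - 1 ≠ 0 := by linarith
  rw [rootScale, mul_rpow (by positivity) (exp_pos _).le, rpow_inv_rpow (by positivity) hγ1,
    ← exp_mul, mul_assoc, ← exp_add]
  field_simp
  simp

lemma hasDerivAt_rootScale (S : ℝ) :
    HasDerivAt (rootScale γ Cv c) (-rootScale γ Cv c S / (Cv * (γ - 1))) S := by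
  refine ((((hasDerivAt_neg S).div_const (Cv * (γ - 1))).exp).const_mul
    ((c ^ 2) ^ (γ - 1)⁻¹)).congr_deriv ?_
  rw [rootScale]
  ring

variable {ρ S : ℝ}

lemma densityRoot_nonneg (hγ : 0 < γ) (hc : c ≠ 0) (hρ : 0 ≤ ρ) :
    0 ≤ densityRoot γ Cv c ρ S :=
  mul_nonneg (rootScale_pos hc S).le (profile_nonneg hγ (div_nonneg hρ (rootScale_pos hc S).le))

lemma densityRoot_pos (hγ : 0 < γ) (hc : c ≠ 0) (hρ : 0 < ρ) : 0 < densityRoot γ Cv c ρ S :=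
  mul_pos (rootScale_pos hc S) (profile_pos hγ (div_pos hρ (rootScale_pos hc S)))

lemma densityRoot_rpow_sub_one_mul_exp (hγ : 1 < γ) (hc : c ≠ 0) (hρ : 0 ≤ ρ) :
    densityRoot γ Cv c ρ S ^ (γ - 1) * exp (S / Cv) =
      c ^ 2 * profile γ (ρ / rootScale γ Cv c S) ^ (γ - 1) := by
  rw [densityRoot, mul_rpow (rootScale_pos hc S).le
    (profile_nonneg (by linarith) (div_nonneg hρ (rootScale_pos hc S).le))]
  linear_combination profile γ (ρ / rootScale γ Cv c S) ^ (γ - 1) *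
    rootScale_rpow_mul_exp (Cv := Cv) (c := c) hγ S

lemma densityRoot_rpow_mul_exp (hγ : 1 < γ) (hc : c ≠ 0) (hρ : 0 ≤ ρ) :
    densityRoot γ Cv c ρ S ^ γ * exp (S / Cv) =
      c ^ 2 * rootScale γ Cv c S * profile γ (ρ / rootScale γ Cv c S) ^ γ := by
  have hγ0 : γ ≠ 0 := by linarith
  rw [rpow_eq_rpow_sub_one_mul (densityRoot_nonneg (by linarith) hc hρ) hγ0,
    rpow_eq_rpow_sub_one_mul (profile_nonneg (by linarith) (div_nonneg hρ (rootScale_pos hc S).le))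
      hγ0, mul_right_comm, densityRoot_rpow_sub_one_mul_exp hγ hc hρ, densityRoot]
  ring

lemma densityRoot_rpow_mul_exp_add (hγ : 1 < γ) (hc : c ≠ 0) (hρ : 0 ≤ ρ) :
    densityRoot γ Cv c ρ S ^ γ * exp (S / Cv) + c ^ 2 * (densityRoot γ Cv c ρ S - ρ) = 0 := by
  have hμ := rootScale_pos (γ := γ) (Cv := Cv) hc S
  have ht := profile_rpow_add_self (γ := γ) (by linarith) (div_nonneg hρ hμ.le)
  rw [densityRoot_rpow_mul_exp hγ hc hρ, densityRoot]
  field_simp at ht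
  linear_combination c ^ 2 * ht

lemma eq_densityRoot (hγ : 1 < γ) (hc : c ≠ 0) (hρ : 0 ≤ ρ) {n : ℝ} (hn : 0 ≤ n)
    (h : n ^ γ * exp (S / Cv) + c ^ 2 * (n - ρ) = 0) : n = densityRoot γ Cv c ρ S := by
  refine (strictMonoOn_rpow_mul_add (γ := γ) (by linarith) (exp_pos (S / Cv)).le hc).injOn hn
    (densityRoot_nonneg (by linarith) hc hρ) ?_
  linear_combination h - densityRoot_rpow_mul_exp_add (Cv := Cv) (S := S) hγ hc hρ

lemma hasDerivAt_densityRoot_fst (hγ : 1 < γ) (hc : c ≠ 0) (hρ : 0 < ρ) :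
    HasDerivAt (densityRoot γ Cv c · S)
      (c ^ 2 / (γ * (densityRoot γ Cv c ρ S ^ (γ - 1) * exp (S / Cv)) + c ^ 2)) ρ := by
  have hμ := rootScale_pos (γ := γ) (Cv := Cv) hc S
  refine (((hasDerivAt_profile (by linarith) (div_pos hρ hμ)).comp ρ
    ((hasDerivAt_id ρ).div_const _)).const_mul _).congr_deriv ?_
  rw [densityRoot_rpow_sub_one_mul_exp hγ hc hρ.le]
  field_simp

lemma hasDerivAt_densityRoot_snd (hγ : 1 < γ) (hCv : Cv ≠ 0) (hc : c ≠ 0) (hρ : 0 < ρ) :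
    HasDerivAt (densityRoot γ Cv c ρ ·)
      (-(densityRoot γ Cv c ρ S ^ γ * exp (S / Cv) / Cv) /
        (γ * (densityRoot γ Cv c ρ S ^ (γ - 1) * exp (S / Cv)) + c ^ 2)) S := by
  have hμ := rootScale_pos (γ := γ) (Cv := Cv) hc S
  have ht := profile_pos (by linarith : 0 < γ) (div_pos hρ hμ)
  have hsum := profile_rpow_add_self (γ := γ) (by linarith) (div_pos hρ hμ).le
  have hγ1 : γ - 1 ≠ 0 := by linarith
  refine ((hasDerivAt_rootScale S).mul ((hasDerivAt_profile (by linarith) (div_pos hρ hμ)).comp S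
    ((hasDerivAt_const S ρ).div (hasDerivAt_rootScale S) hμ.ne'))).congr_deriv ?_
  rw [densityRoot_rpow_sub_one_mul_exp hγ hc hρ.le,
    densityRoot_rpow_mul_exp hγ hc hρ.le]
  set μ := rootScale γ Cv c S
  set t := profile γ (ρ / μ)
  change -μ / (Cv * (γ - 1)) * t + _ = _
  rw [show ρ = μ * (t ^ γ + t) by rw [hsum]; field_simp,
    rpow_eq_rpow_sub_one_mul ht.le (by linarith : γ ≠ 0)]
  field_simp
  ring

noncomputable def pressure (γ Cv c ρ S : ℝ) : ℝ := (γ - 1) * densityRoot γ Cv c ρ S ^ γ * exp (S / Cv)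

lemma hasDerivAt_pressure_fst (hγ : 1 < γ) (hc : c ≠ 0) (hρ : 0 < ρ) :
    HasDerivAt (pressure γ Cv c · S)
      ((γ - 1) * γ * (densityRoot γ Cv c ρ S ^ (γ - 1) * exp (S / Cv)) *
        (c ^ 2 / (γ * (densityRoot γ Cv c ρ S ^ (γ - 1) * exp (S / Cv)) + c ^ 2))) ρ :=
  ((((hasDerivAt_densityRoot_fst hγ hc hρ).rpow_const
    (Or.inl (densityRoot_pos (by linarith) hc hρ).ne')).const_mul (γ - 1)).mul_const
      (exp (S / Cv))).congr_deriv (by ring)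

lemma hasDerivAt_pressure_snd (hγ : 1 < γ) (hCv : Cv ≠ 0) (hc : c ≠ 0) (hρ : 0 < ρ) :
    HasDerivAt (pressure γ Cv c ρ ·)
      ((γ - 1) / Cv * (densityRoot γ Cv c ρ S ^ γ * exp (S / Cv)) *
        (c ^ 2 / (γ * (densityRoot γ Cv c ρ S ^ (γ - 1) * exp (S / Cv)) + c ^ 2))) S := by
  have hP : (pressure γ Cv c ρ ·) =
      fun s => (γ - 1) * c ^ 2 * (ρ - densityRoot γ Cv c ρ s) := by
    funext s
    rw [pressure]
    linear_combination (γ - 1) * densityRoot_rpow_mul_exp_add (S := s) hγ hc hρ.le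
  rw [hP]
  exact (((hasDerivAt_densityRoot_snd hγ hCv hc hρ).const_sub ρ).const_mul _).congr_deriv
    (by ring)

lemma densityRoot_le (hγ : 1 < γ) (hc : c ≠ 0) (hρ : 0 ≤ ρ) : densityRoot γ Cv c ρ S ≤ ρ := by
  have h := densityRoot_rpow_mul_exp_add (Cv := Cv) (S := S) hγ hc hρ
  have : 0 ≤ densityRoot γ Cv c ρ S ^ γ * exp (S / Cv) :=
    mul_nonneg (rpow_nonneg (densityRoot_nonneg (by linarith) hc hρ) γ) (exp_pos _).le
  nlinarith [sq_pos_of_ne_zero hc]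

lemma densityRoot_rpow_sub_one_mul_exp_le (hγ : 1 < γ) (hc : c ≠ 0) (hρ : 0 ≤ ρ)
    (hsmall : ρ ^ (γ - 1) * exp (S / Cv) ≤ c ^ 2) :
    densityRoot γ Cv c ρ S ^ (γ - 1) * exp (S / Cv) ≤ c ^ 2 :=
  (mul_le_mul_of_nonneg_right (rpow_le_rpow (densityRoot_nonneg (by linarith) hc hρ)
    (densityRoot_le hγ hc hρ) (by linarith)) (exp_pos _).le).trans hsmall

lemma le_two_mul_densityRoot (hγ : 1 < γ) (hc : c ≠ 0) (hρ : 0 ≤ ρ)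
    (hsmall : ρ ^ (γ - 1) * exp (S / Cv) ≤ c ^ 2) : ρ ≤ 2 * densityRoot γ Cv c ρ S := by
  have hn := densityRoot_nonneg (Cv := Cv) (S := S) (by linarith : 0 < γ) hc hρ
  have h := densityRoot_rpow_mul_exp_add (Cv := Cv) (S := S) hγ hc hρ
  have hle := mul_le_mul_of_nonneg_right
    (densityRoot_rpow_sub_one_mul_exp_le hγ hc hρ hsmall) hn
  rw [rpow_eq_rpow_sub_one_mul hn (by linarith : γ ≠ 0)] at h
  nlinarith [sq_pos_of_ne_zero hc]

lemma rpow_mul_exp_le_of_le_rootScale (hγ : 1 < γ) (hCv : 0 < Cv) (hρ : 0 ≤ ρ) {B : ℝ}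
    (hρB : ρ ≤ rootScale γ Cv c B) (hSB : S ≤ B) : ρ ^ (γ - 1) * exp (S / Cv) ≤ c ^ 2 :=
  calc ρ ^ (γ - 1) * exp (S / Cv) ≤ rootScale γ Cv c B ^ (γ - 1) * exp (B / Cv) :=
        mul_le_mul (rpow_le_rpow hρ hρB (by linarith))
          (exp_le_exp.2 (div_le_div_of_nonneg_right hSB hCv.le)) (exp_pos _).le
          (rpow_nonneg (hρ.trans hρB) _)
    _ = c ^ 2 := rootScale_rpow_mul_exp hγ B

/-- `min 1 Cv⁻¹` and `max γ Cv⁻¹` bound the coefficients `1`, `γ`, `1 / Cv` of `P`, `∂ρ P`, `∂S P`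
over `γ - 1`; `2 ^ γ` and `1 + γ` come from `ρ / 2 ≤ n` and `1 / (1 + γ) ≤ f`. -/
noncomputable def thetaLower (γ Cv B : ℝ) : ℝ :=
  (γ - 1) * min 1 Cv⁻¹ * (exp (-B / Cv) / 2 ^ γ) * (1 + γ)⁻¹

noncomputable def thetaUpper (γ Cv B : ℝ) : ℝ := (γ - 1) * max γ Cv⁻¹ * exp (B / Cv)

section Bounds

variable {B : ℝ} (hγ : 1 < γ) (hCv : 0 < Cv)
include hγ hCv

lemma thetaLower_pos : 0 < thetaLower γ Cv B := by
  have : 0 < min 1 Cv⁻¹ := lt_min one_pos (by positivity)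
  unfold thetaLower
  have : 0 < γ - 1 := by linarith
  positivity

lemma thetaLower_le_thetaUpper (hB : 0 ≤ B) : thetaLower γ Cv B ≤ thetaUpper γ Cv B := by
  have hk : 0 ≤ (γ - 1) * min 1 Cv⁻¹ :=
    mul_nonneg (by linarith) (le_min zero_le_one (by positivity))
  refine (mul_mul_mem_Icc hk le_rfl ?_ (by positivity) le_rfl ?_ (by positivity) le_rfl
    (inv_le_one_of_one_le₀ (by linarith))).2
  · exact mul_le_mul_of_nonneg_left ((min_le_left _ _).trans ((le_max_left _ _).trans' hγ.le))
      (by linarith)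
  · exact (div_le_self (exp_pos _).le (one_le_rpow one_le_two (by linarith))).trans
      (exp_le_exp.2 (div_le_div_of_nonneg_right (by linarith) hCv.le))

variable (hc : c ≠ 0) (hρ : 0 < ρ) (hρB : ρ ≤ rootScale γ Cv c B) (hSB : |S| ≤ B)
include hc hρ hρB hSB

lemma rpow_mul_exp_mem_Icc {a : ℝ} (ha : 0 ≤ a) (haγ : a ≤ γ) :
    exp (-B / Cv) / 2 ^ γ * ρ ^ a ≤ densityRoot γ Cv c ρ S ^ a * exp (S / Cv) ∧
      densityRoot γ Cv c ρ S ^ a * exp (S / Cv) ≤ exp (B / Cv) * ρ ^ a := by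
  obtain ⟨hSlo, hShi⟩ := abs_le.mp hSB
  have hsmall := rpow_mul_exp_le_of_le_rootScale hγ hCv hρ.le hρB hShi
  exact rpow_mul_mem_Icc ha haγ (le_two_mul_densityRoot hγ hc hρ.le hsmall)
    (densityRoot_le hγ hc hρ.le) (exp_pos _).le
    (exp_le_exp.2 (div_le_div_of_nonneg_right hSlo hCv.le))
    (exp_le_exp.2 (div_le_div_of_nonneg_right hShi hCv.le))

lemma inv_one_add_le_div_and_div_le_one_of_le_rootScale :
    (1 + γ)⁻¹ ≤ c ^ 2 / (γ * (densityRoot γ Cv c ρ S ^ (γ - 1) * exp (S / Cv)) + c ^ 2) ∧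
      c ^ 2 / (γ * (densityRoot γ Cv c ρ S ^ (γ - 1) * exp (S / Cv)) + c ^ 2) ≤ 1 :=
  inv_one_add_le_div_and_div_le_one (by linarith) hc
    (mul_nonneg (rpow_nonneg (densityRoot_nonneg (by linarith) hc hρ.le) _) (exp_pos _).le)
    (densityRoot_rpow_sub_one_mul_exp_le hγ hc hρ.le
      (rpow_mul_exp_le_of_le_rootScale hγ hCv hρ.le hρB (abs_le.mp hSB).2))

lemma pressure_bounds :
    (thetaLower γ Cv B * ρ ^ γ ≤ pressure γ Cv c ρ S ∧
      pressure γ Cv c ρ S ≤ thetaUpper γ Cv B * ρ ^ γ) ∧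
    (∃ dρ, HasDerivAt (pressure γ Cv c · S) dρ ρ ∧
      thetaLower γ Cv B * ρ ^ (γ - 1) ≤ dρ ∧ dρ ≤ thetaUpper γ Cv B * ρ ^ (γ - 1)) ∧
    (∃ dS, HasDerivAt (pressure γ Cv c ρ ·) dS S ∧
      thetaLower γ Cv B * ρ ^ γ ≤ dS ∧ dS ≤ thetaUpper γ Cv B * ρ ^ γ) := by
  have hγ1 : 0 < γ - 1 := by linarith
  have hkmin : 0 ≤ (γ - 1) * min 1 Cv⁻¹ :=
    mul_nonneg hγ1.le (le_min zero_le_one (by positivity))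
  have hkP : (γ - 1) * min 1 Cv⁻¹ ≤ γ - 1 ∧ γ - 1 ≤ (γ - 1) * max γ Cv⁻¹ := by
    constructor <;> nlinarith [min_le_left 1 Cv⁻¹, le_max_left γ Cv⁻¹]
  have hkρ : (γ - 1) * min 1 Cv⁻¹ ≤ (γ - 1) * γ ∧ (γ - 1) * γ ≤ (γ - 1) * max γ Cv⁻¹ := by
    constructor <;> nlinarith [min_le_left 1 Cv⁻¹, le_max_left γ Cv⁻¹]
  have hkS : (γ - 1) * min 1 Cv⁻¹ ≤ (γ - 1) / Cv ∧ (γ - 1) / Cv ≤ (γ - 1) * max γ Cv⁻¹ := by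
    rw [div_eq_mul_inv]
    constructor <;> nlinarith [min_le_right 1 Cv⁻¹, le_max_right γ Cv⁻¹]
  have hγinv : 0 ≤ (1 + γ)⁻¹ ∧ (1 + γ)⁻¹ ≤ 1 :=
    ⟨by positivity, inv_le_one_of_one_le₀ (by linarith)⟩
  obtain ⟨hXγ, hXγ'⟩ := rpow_mul_exp_mem_Icc hγ hCv hc hρ hρB hSB (by linarith) le_rfl
  obtain ⟨hXγ1, hXγ1'⟩ := rpow_mul_exp_mem_Icc hγ hCv hc hρ hρB hSB hγ1.le (by linarith)
  obtain ⟨hf, hf'⟩ := inv_one_add_le_div_and_div_le_one_of_le_rootScale hγ hCv hc hρ hρB hSB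
  have hP := mul_mul_mem_Icc hkmin hkP.1 hkP.2 (by positivity) hXγ hXγ' hγinv.1 hγinv.2 le_rfl
  have hPρ := mul_mul_mem_Icc hkmin hkρ.1 hkρ.2 (by positivity) hXγ1 hXγ1' hγinv.1 hf hf'
  have hPS := mul_mul_mem_Icc hkmin hkS.1 hkS.2 (by positivity) hXγ hXγ' hγinv.1 hf hf'
  simp only [thetaLower, thetaUpper, pressure]
  refine ⟨?_, ⟨_, hasDerivAt_pressure_fst hγ hc hρ, ?_⟩,
    ⟨_, hasDerivAt_pressure_snd hγ hCv.ne' hc hρ, ?_⟩⟩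
  · constructor <;> linarith [hP.1, hP.2]
  · constructor <;> linarith [hPρ.1, hPρ.2]
  · constructor <;> linarith [hPS.1, hPS.2]

end Bounds

end PolytropicPressure

open PolytropicPressure

/-- Uniformly for `|S| ≤ B`, as `ρ → 0⁺` one has `P = Θ(ρ^γ)`,
`∂ρ P = Θ(ρ^(γ-1))` and `∂S P = Θ(ρ^γ)`. -/
theorem stmt_14 (γ Cv c B : ℝ) (hγ : 1 < γ) (hCv : 0 < Cv) (hc : 0 < c) (hB : 0 < B)
    (nf : ℝ → ℝ → ℝ)
    (hnonneg : ∀ ρ : ℝ, 0 ≤ ρ → ∀ S : ℝ, 0 ≤ nf ρ S)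
    (heq : ∀ ρ : ℝ, 0 ≤ ρ → ∀ S : ℝ,
      (nf ρ S) ^ γ * Real.exp (S / Cv) + c ^ 2 * (nf ρ S - ρ) = 0) :
    ∃ c₁ c₂ ρ₀ : ℝ, 0 < c₁ ∧ c₁ ≤ c₂ ∧ 0 < ρ₀ ∧
      ∀ ρ S : ℝ, 0 < ρ → ρ ≤ ρ₀ → |S| ≤ B →
        (c₁ * ρ ^ γ ≤ (γ - 1) * (nf ρ S) ^ γ * Real.exp (S / Cv) ∧
          (γ - 1) * (nf ρ S) ^ γ * Real.exp (S / Cv) ≤ c₂ * ρ ^ γ) ∧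
        (∃ dρ : ℝ,
          HasDerivAt (fun r : ℝ => (γ - 1) * (nf r S) ^ γ * Real.exp (S / Cv)) dρ ρ ∧
          c₁ * ρ ^ (γ - 1) ≤ dρ ∧ dρ ≤ c₂ * ρ ^ (γ - 1)) ∧
        (∃ dS : ℝ,
          HasDerivAt (fun s : ℝ => (γ - 1) * (nf ρ s) ^ γ * Real.exp (s / Cv)) dS S ∧
          c₁ * ρ ^ γ ≤ dS ∧ dS ≤ c₂ * ρ ^ γ) := by
  have hP : ∀ ρ, 0 ≤ ρ → ∀ S, (γ - 1) * nf ρ S ^ γ * exp (S / Cv) = pressure γ Cv c ρ S :=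
    fun ρ hρ S => by rw [pressure, eq_densityRoot hγ hc.ne' hρ (hnonneg ρ hρ S) (heq ρ hρ S)]
  refine ⟨thetaLower γ Cv B, thetaUpper γ Cv B, rootScale γ Cv c B, thetaLower_pos hγ hCv,
    thetaLower_le_thetaUpper hγ hCv hB.le, rootScale_pos hc.ne' B, fun ρ S hρ hρB hSB => ?_⟩
  obtain ⟨hbounds, ⟨dρ, hdρ, hdρ_bounds⟩, ⟨dS, hdS, hdS_bounds⟩⟩ :=
    pressure_bounds hγ hCv hc.ne' hρ hρB hSB
  refine ⟨hP ρ hρ.le S ▸ hbounds, ⟨dρ, hdρ.congr_of_eventuallyEq ?_, hdρ_bounds⟩,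
    ⟨dS, hdS.congr_of_eventuallyEq ?_, hdS_bounds⟩⟩
  · filter_upwards [eventually_gt_nhds hρ] with r hr using hP r hr.le S
  · filter_upwards with s using hP ρ hρ.le s
end
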